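/- arXiv:2006.08022 — 7 statements merged into one kernel-verified Lean document; each statement's English description precedes it below -/
import Mathlib

section
/- Let G be a group, k a field, γ a 2-cocycle on G with values in kˣ, and z a central element of G. Then the function γ_z : G → kˣ defined by γ_z(g) = γ(z,g)·γ(g,z)⁻¹ is a group homomorphism. -/
/-- For a 2-cocycle `γ` on a group `G` with values in `kˣ` and a central element `z`,
the function `g ↦ γ(z,g)·γ(g,z)⁻¹` is a group homomorphism `G → kˣ`. -/
theorem stmt_0 {G : Type*} [Group G] {k : Type*} [Field k]
    (γ : G → G → kˣ)
    (hγ : ∀ f g h : G, γ f g * γ (f * g) h = γ g h * γ f (g * h))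
    (z : G) (hz : z ∈ Subgroup.center G) :
    ∃ φ : G →* kˣ, ∀ g : G, φ g = γ z g * (γ g z)⁻¹ := by
  have hc : ∀ w : G, w * z = z * w := fun w => Subgroup.mem_center_iff.mp hz w
  refine ⟨MonoidHom.mk' (fun g => γ z g * (γ g z)⁻¹) ?_, fun g => rfl⟩
  intro g h
  have h1 := congrArg Units.val (hγ z g h)
  have h2 := congrArg Units.val (hγ g z h)
  have h3 := congrArg Units.val (hγ g h z)
  rw [hc g, ← hc h] at h2
  apply Units.ext
  push_cast at h1 h2 h3 ⊢
  have hr : (γ g h : k) ≠ 0 := Units.ne_zero _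
  field_simp at h1 h2 h3 ⊢
  apply mul_left_cancel₀ hr
  linear_combination (-(γ g z : k) * (γ h z : k)) * h1 +
    ((γ z g : k) * (γ h z : k)) * h2 + (-(γ z g : k) * (γ z h : k)) * h3
end

section
/- Let G be a group and k a field. The pairing sending a 2-cocycle γ on G with values in kˣ and a central element z of G to the character γ_z is multiplicative in each argument: (γ·γ')_z = γ_z·γ'_z for any two 2-cocycles γ, γ' (where γ·γ' denotes the pointwise product, again a 2-cocycle) and any central z, and γ_{z·w} = γ_z·γ_w for any central elements z, w ∈ G. Hence (γ,z) ↦ γ_z defines a bimultiplicative pairing from 2-cocycles (modulo coboundaries) and the center Z(G) to Hom(G,kˣ). -/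
/-- The pairing `(γ, z) ↦ γ_z`, `γ_z(g) = γ(z,g)·γ(g,z)⁻¹`, is multiplicative in each argument:
the pointwise product of two 2-cocycles is again a 2-cocycle, `(γ·γ')_z = γ_z·γ'_z`, and
`γ_{z·w} = γ_z·γ_w` for central `z, w`. -/
theorem stmt_2 {G : Type*} [Group G] {k : Type*} [Field k]
    (γ γ' : G → G → kˣ)
    (hγ : ∀ f g h : G, γ f g * γ (f * g) h = γ g h * γ f (g * h))
    (hγ' : ∀ f g h : G, γ' f g * γ' (f * g) h = γ' g h * γ' f (g * h))
    (z w : G) (hz : z ∈ Subgroup.center G) (hw : w ∈ Subgroup.center G) :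
    (∀ f g h : G,
      (γ f g * γ' f g) * (γ (f * g) h * γ' (f * g) h) =
        (γ g h * γ' g h) * (γ f (g * h) * γ' f (g * h))) ∧
    (∀ g : G,
      (γ z g * γ' z g) * (γ g z * γ' g z)⁻¹ =
        (γ z g * (γ g z)⁻¹) * (γ' z g * (γ' g z)⁻¹)) ∧
    (∀ g : G,
      γ (z * w) g * (γ g (z * w))⁻¹ =
        (γ z g * (γ g z)⁻¹) * (γ w g * (γ g w)⁻¹)) := by
  rw [Subgroup.mem_center_iff] at hz hw
  refine ⟨fun f g h => ?_, fun g => ?_, fun g => ?_⟩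
  · rw [mul_mul_mul_comm, hγ, hγ', mul_mul_mul_comm]
  · rw [mul_inv, mul_mul_mul_comm]
  · have e1 := hγ z w g
    have e2 := hγ z g w
    have e3 := hγ g z w
    rw [← hw g] at e1
    rw [hz g] at e3
    have E1 : (γ z w : k) * γ (z * w) g = γ w g * γ z (g * w) := by exact_mod_cast e1
    have E2 : (γ z g : k) * γ (z * g) w = γ g w * γ z (g * w) := by exact_mod_cast e2
    have E3 : (γ g z : k) * γ (z * g) w = γ z w * γ g (z * w) := by exact_mod_cast e3
    have key : (γ z w : k) * ((γ (z * w) g : k) * ((γ g z : k) * γ g w)) =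
        (γ z w : k) * ((γ z g : k) * γ w g * γ g (z * w)) := by
      linear_combination ((γ g z : k) * γ g w) * E1 - ((γ w g : k) * γ g z) * E2 +
        ((γ w g : k) * γ z g) * E3
    have key2 := mul_left_cancel₀ (Units.ne_zero (γ z w)) key
    rw [Units.ext_iff]
    push_cast
    field_simp
    linear_combination key2
end

section
/- Let k be a commutative ring, G a group, U = U₀ ⊕ U₁ and V = V₀ ⊕ V₁ ℤ/2ℤ-graded k-modules, γ_U, γ_V : G × G → kˣ, and ξ_U, ξ_V : G → ℤ/2ℤ group homomorphisms. Let ρ_U : G → GL(U) and ρ_V : G → GL(V) be projective representations with multipliers γ_U and γ_V such that ρ_U(g)(U_i) ⊆ U_{i+ξ_U(g)} and ρ_V(g)(V_j) ⊆ V_{j+ξ_V(g)} for all g ∈ G and i,j ∈ ℤ/2ℤ. Define ρ(g) : U ⊗_k V → U ⊗_k V to be the k-linear map determined by ρ(g)(u ⊗ v) = (−1)^{ξ_U(g)·j}·(ρ_U(g)u) ⊗ (ρ_V(g)v) for u ∈ U and homogeneous v ∈ V_j. Then ρ(f) ∘ ρ(g) = (−1)^{ξ_U(f)·ξ_V(g)}·γ_U(f,g)·γ_V(f,g)·ρ(f·g)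 for all f,g ∈ G; that is, ρ is a projective representation of G on U ⊗_k V with multiplier (f,g) ↦ (−1)^{ξ_U(f)ξ_V(g)}·γ_U(f,g)·γ_V(f,g). -/
open scoped TensorProduct

/-! The sign `(-1)^{ξ_U(g)·j}` is what makes the Koszul rule work: acting by `g` and then `f` on
`u ⊗ v` with `v ∈ V_j` produces `(-1)^{ξ_U(g) j + ξ_U(f)(j + ξ_V(g))}`, and since `ξ_U` is additive
this is `(-1)^{ξ_U(f) ξ_V(g)}` times the sign `(-1)^{ξ_U(fg) j}` of `ρ(fg)`. The scalars `γ_U, γ_V`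
come out of the two tensor factors, and homogeneous elements span `V`, so the pure tensors
`u ⊗ v` with `v` homogeneous determine a linear map on `U ⊗ V`. -/

theorem neg_one_pow_zmod_two_val_add {R : Type*} [Ring R] (a b : ZMod 2) :
    (-1 : R) ^ (a + b).val = (-1 : R) ^ a.val * (-1 : R) ^ b.val := by
  rw [← pow_add, ZMod.val_add, ← neg_one_pow_eq_pow_mod_two]

theorem TensorProduct.ext_of_iSup_eq_top_right {R M N P ι : Type*} [CommSemiring R]
    [AddCommMonoid M] [Module R M] [AddCommMonoid N] [Module R N] [AddCommMonoid P] [Module R P]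
    {p : ι → Submodule R N} (hp : ⨆ i, p i = ⊤) {φ ψ : M ⊗[R] N →ₗ[R] P}
    (h : ∀ (m : M) (i : ι), ∀ n ∈ p i, φ (m ⊗ₜ n) = ψ (m ⊗ₜ n)) : φ = ψ := by
  refine TensorProduct.ext' fun m n => ?_
  have hn : n ∈ ⨆ i, p i := hp ▸ Submodule.mem_top
  induction hn using Submodule.iSup_induction' with
  | mem i n hn => exact h m i n hn
  | zero => simp
  | add n n' _ _ hn hn' => rw [TensorProduct.tmul_add, map_add, map_add, hn, hn']

theorem stmt_6_general {k : Type*} [CommRing k] {G : Type*} [Group G]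
    {U V : Type*} [AddCommGroup U] [Module k U] [AddCommGroup V] [Module k V]
    (𝒱 : ZMod 2 → Submodule k V)
    (hV : DirectSum.IsInternal 𝒱)
    (γU γV : G → G → kˣ) (ξU ξV : G → ZMod 2)
    (hξU : ∀ f g : G, ξU (f * g) = ξU f + ξU g)
    (ρU : G → LinearMap.GeneralLinearGroup k U)
    (ρV : G → LinearMap.GeneralLinearGroup k V)
    (hρU : ∀ f g : G, (ρU f : U →ₗ[k] U) ∘ₗ (ρU g : U →ₗ[k] U) =
      (γU f g : k) • (ρU (f * g) : U →ₗ[k] U))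
    (hρV : ∀ f g : G, (ρV f : V →ₗ[k] V) ∘ₗ (ρV g : V →ₗ[k] V) =
      (γV f g : k) • (ρV (f * g) : V →ₗ[k] V))
    (hgrV : ∀ (g : G) (j : ZMod 2), ∀ v ∈ 𝒱 j, (ρV g : V →ₗ[k] V) v ∈ 𝒱 (j + ξV g))
    (ρ : G → (U ⊗[k] V →ₗ[k] U ⊗[k] V))
    (hρ : ∀ (g : G) (u : U) (j : ZMod 2), ∀ v ∈ 𝒱 j,
      ρ g (u ⊗ₜ[k] v) =
        ((-1 : k) ^ (ξU g * j).val) •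
          (((ρU g : U →ₗ[k] U) u) ⊗ₜ[k] ((ρV g : V →ₗ[k] V) v))) :
    ∀ f g : G, (ρ f) ∘ₗ (ρ g) =
      ((-1 : k) ^ (ξU f * ξV g).val * (γU f g : k) * (γV f g : k)) • ρ (f * g) := by
  intro f g
  refine TensorProduct.ext_of_iSup_eq_top_right hV.submodule_iSup_eq_top fun u j v hv => ?_
  have hUu := LinearMap.congr_fun (hρU f g) u
  have hVv := LinearMap.congr_fun (hρV f g) v
  have hsign : (-1 : k) ^ (ξU g * j).val * (-1 : k) ^ (ξU f * (j + ξV g)).val =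
      (-1 : k) ^ (ξU f * ξV g).val * (-1 : k) ^ (ξU (f * g) * j).val := by
    rw [← neg_one_pow_zmod_two_val_add, ← neg_one_pow_zmod_two_val_add, hξU]
    ring_nf
  simp only [LinearMap.comp_apply, LinearMap.smul_apply] at hUu hVv ⊢
  rw [hρ g u j v hv, map_smul, hρ f _ _ _ (hgrV g j v hv), hρ (f * g) u j v hv, hUu, hVv,
    TensorProduct.smul_tmul_smul, smul_smul, smul_smul, smul_smul, hsign]
  congr 1
  ring

/-- Tensor product of two super (ℤ/2ℤ-graded) projective representations: if `ρ_U, ρ_V` are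
projective representations with multipliers `γ_U, γ_V` whose actions shift the gradings by
group homomorphisms `ξ_U, ξ_V : G → ℤ/2ℤ`, then the map `ρ` on `U ⊗ V` determined by
`ρ(g)(u ⊗ v) = (−1)^{ξ_U(g)·j}·ρ_U(g)u ⊗ ρ_V(g)v` (`v` homogeneous of degree `j`) is a
projective representation with multiplier `(f,g) ↦ (−1)^{ξ_U(f)ξ_V(g)}·γ_U(f,g)·γ_V(f,g)`. -/
theorem stmt_6 {k : Type*} [CommRing k] {G : Type*} [Group G]
    {U V : Type*} [AddCommGroup U] [Module k U] [AddCommGroup V] [Module k V]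
    (𝒰 : ZMod 2 → Submodule k U) (𝒱 : ZMod 2 → Submodule k V)
    (hU : DirectSum.IsInternal 𝒰) (hV : DirectSum.IsInternal 𝒱)
    (γU γV : G → G → kˣ) (ξU ξV : G → ZMod 2)
    (hξU : ∀ f g : G, ξU (f * g) = ξU f + ξU g)
    (hξV : ∀ f g : G, ξV (f * g) = ξV f + ξV g)
    (ρU : G → LinearMap.GeneralLinearGroup k U)
    (ρV : G → LinearMap.GeneralLinearGroup k V)
    (hρU : ∀ f g : G, (ρU f : U →ₗ[k] U) ∘ₗ (ρU g : U →ₗ[k] U) =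
      (γU f g : k) • (ρU (f * g) : U →ₗ[k] U))
    (hρV : ∀ f g : G, (ρV f : V →ₗ[k] V) ∘ₗ (ρV g : V →ₗ[k] V) =
      (γV f g : k) • (ρV (f * g) : V →ₗ[k] V))
    (hgrU : ∀ (g : G) (i : ZMod 2), ∀ u ∈ 𝒰 i, (ρU g : U →ₗ[k] U) u ∈ 𝒰 (i + ξU g))
    (hgrV : ∀ (g : G) (j : ZMod 2), ∀ v ∈ 𝒱 j, (ρV g : V →ₗ[k] V) v ∈ 𝒱 (j + ξV g))
    (ρ : G → (U ⊗[k] V →ₗ[k] U ⊗[k] V))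
    (hρ : ∀ (g : G) (u : U) (j : ZMod 2), ∀ v ∈ 𝒱 j,
      ρ g (u ⊗ₜ[k] v) =
        ((-1 : k) ^ (ξU g * j).val) •
          (((ρU g : U →ₗ[k] U) u) ⊗ₜ[k] ((ρV g : V →ₗ[k] V) v))) :
    ∀ f g : G, (ρ f) ∘ₗ (ρ g) =
      ((-1 : k) ^ (ξU f * ξV g).val * (γU f g : k) * (γV f g : k)) • ρ (f * g) :=
  stmt_6_general 𝒱 hV γU γV ξU ξV hξU ρU ρV hρU hρV hgrV ρ hρ
end

section
/- Let k be a commutative ring and Q the quadratic form on k × k given by Q(a,b) = a² + b². Let C = CliffordAlgebra Q with generators e₁ = ι(1,0) and e₂ = ι(0,1) (so e₁² = e₂² = 1 and e₁e₂ + e₂e₁ = 0), and let σ : C → C be the algebra automorphism induced by the isometry of (k × k, Q) swapping the two coordinates (so σ(e₁) = e₂ and σ(e₂) = e₁). Then for every i ∈ ℤ/2ℤ and every r in the grading component evenOdd Q i, one has σ(r)·(e₁ − e₂) = (−1)^i·((e₁ − e₂)·r). -/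
/-- Let `Q(a,b) = a² + b²` on `k × k`, `C = CliffordAlgebra Q` with generators
`e₁ = ι(1,0)`, `e₂ = ι(0,1)`, and let `σ` be the algebra automorphism induced by the
coordinate-swap isometry (so `σ(ι v) = ι (swap v)`). Then for every `i : ℤ/2ℤ` and every
`r` in the grading component `evenOdd Q i`:
`σ(r)·(e₁ − e₂) = (−1)^i·((e₁ − e₂)·r)`. -/
theorem stmt_8 {k : Type*} [CommRing k]
    (Q : QuadraticForm k (k × k)) (hQ : ∀ v : k × k, Q v = v.1 ^ 2 + v.2 ^ 2)
    (σ : CliffordAlgebra Q →ₐ[k] CliffordAlgebra Q)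
    (hσ : ∀ v : k × k, σ (CliffordAlgebra.ι Q v) = CliffordAlgebra.ι Q (Prod.swap v)) :
    ∀ (i : ZMod 2), ∀ r ∈ CliffordAlgebra.evenOdd Q i,
      σ r * (CliffordAlgebra.ι Q (1, 0) - CliffordAlgebra.ι Q (0, 1)) =
        (-1 : CliffordAlgebra Q) ^ i.val *
          ((CliffordAlgebra.ι Q (1, 0) - CliffordAlgebra.ι Q (0, 1)) * r) := by
  set ι := CliffordAlgebra.ι Q with hι
  set u : CliffordAlgebra Q := ι (1, 0) - ι (0, 1) with hu_def
  have hu : u = ι ((1 : k), (-1 : k)) := by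
    rw [hu_def, ← map_sub]
    norm_num
  -- the key anticommutation relation
  have hkey : ∀ v : k × k, ι (Prod.swap v) * u = -(u * ι v) := by
    rintro ⟨a, b⟩
    have hdecomp : ι (a, b) = ι (b, a) + (a - b) • ι ((1 : k), (-1 : k)) := by
      rw [← map_smul, ← map_add]
      congr 1
      simp [Prod.ext_iff]
    have hpolar : ι (b, a) * ι ((1 : k), (-1 : k)) + ι ((1 : k), (-1 : k)) * ι (b, a)
        = algebraMap k _ (2 * b - 2 * a) := by
      rw [hι, CliffordAlgebra.ι_mul_ι_add_swap]
      congr 1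
      simp [QuadraticMap.polar, hQ]
      ring
    have hbase : ι (b, a) * ι ((1 : k), (-1 : k))
        = algebraMap k _ (2 * b - 2 * a) - ι ((1 : k), (-1 : k)) * ι (b, a) :=
      eq_sub_of_add_eq hpolar
    have hsq : ι ((1 : k), (-1 : k)) * ι ((1 : k), (-1 : k)) = algebraMap k _ 2 := by
      rw [hι, CliffordAlgebra.ι_sq_scalar, hQ]
      norm_num
    have h2 : (a - b) • (algebraMap k (CliffordAlgebra Q)) 2
        = algebraMap k (CliffordAlgebra Q) ((a - b) * 2) := by
      rw [Algebra.smul_def, ← map_mul (algebraMap k (CliffordAlgebra Q))]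
    show ι (b, a) * u = -(u * ι (a, b))
    rw [hu, hdecomp, hbase, mul_add, mul_smul_comm, hsq, h2,
      show ((a - b) * 2 : k) = -(2 * b - 2 * a) by ring, map_neg, neg_add]
    abel
  intro i
  fin_cases i
  · intro r hr
    show σ r * u = (-1 : CliffordAlgebra Q) ^ (0 : ZMod 2).val * (u * r)
    rw [show (0 : ZMod 2).val = 0 from rfl, pow_zero, one_mul]
    refine CliffordAlgebra.even_induction (Q := Q)
      (motive := fun x _ => σ x * u = u * x) ?_ ?_ ?_ r hr
    · intro s
      rw [AlgHom.commutes, Algebra.commutes]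
    · intro x y hx hy ihx ihy
      rw [map_add, add_mul, mul_add, ihx, ihy]
    · intro m₁ m₂ x hx ih
      calc σ (ι m₁ * ι m₂ * x) * u
          = ι (Prod.swap m₁) * (ι (Prod.swap m₂) * (σ x * u)) := by
            rw [map_mul, map_mul, hσ m₁, hσ m₂, mul_assoc, mul_assoc]
        _ = ι (Prod.swap m₁) * (ι (Prod.swap m₂) * u * x) := by rw [ih, mul_assoc]
        _ = ι (Prod.swap m₁) * (-(u * ι m₂) * x) := by rw [hkey m₂]
        _ = -(ι (Prod.swap m₁) * u * (ι m₂ * x)) := by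
            rw [neg_mul, mul_neg, mul_assoc, mul_assoc]
        _ = -(-(u * ι m₁) * (ι m₂ * x)) := by rw [hkey m₁]
        _ = u * (ι m₁ * ι m₂ * x) := by rw [neg_mul, neg_neg, mul_assoc, mul_assoc]
  · intro r hr
    show σ r * u = (-1 : CliffordAlgebra Q) ^ (1 : ZMod 2).val * (u * r)
    rw [show (1 : ZMod 2).val = 1 from rfl, pow_one, neg_one_mul]
    refine CliffordAlgebra.odd_induction (Q := Q)
      (P := fun x _ => σ x * u = -(u * x)) ?_ ?_ ?_ r hr
    · intro v
      rw [hσ v]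
      exact hkey v
    · intro x y hx hy ihx ihy
      rw [map_add, add_mul, mul_add, ihx, ihy, neg_add]
    · intro m₁ m₂ x hx ih
      calc σ (ι m₁ * ι m₂ * x) * u
          = ι (Prod.swap m₁) * (ι (Prod.swap m₂) * (σ x * u)) := by
            rw [map_mul, map_mul, hσ m₁, hσ m₂, mul_assoc, mul_assoc]
        _ = -(ι (Prod.swap m₁) * (ι (Prod.swap m₂) * u * x)) := by
            rw [ih, mul_neg, mul_neg, mul_assoc]
        _ = -(ι (Prod.swap m₁) * (-(u * ι m₂) * x)) := by rw [hkey m₂]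
        _ = ι (Prod.swap m₁) * u * (ι m₂ * x) := by
            rw [neg_mul, mul_neg, neg_neg, mul_assoc, mul_assoc]
        _ = -(u * ι m₁) * (ι m₂ * x) := by rw [hkey m₁]
        _ = -(u * (ι m₁ * ι m₂ * x)) := by rw [neg_mul, mul_assoc, mul_assoc]
end

section
/- Let A and M be abelian groups and let h : A × A × A → M and c : A × A → M satisfy the braided 3-cocycle equations: for all x,y,z,w ∈ A, (i) h(y,z,w) − h(x+y,z,w) + h(x,y+z,w) − h(x,y,z+w) + h(x,y,z) = 0; (ii) c(y,z) − c(x+y,z) + c(x,z) + h(x,y,z) − h(x,z,y) + h(z,x,y) = 0; (iii) c(x,y) − c(x,y+z) + c(x,z) − h(x,y,z) + h(y,x,z) − h(y,z,x) = 0. Define q : A → M by q(x) = c(x,x). Then: q(x+y) − q(x) − q(y) = c(x,y) + c(y,x) for all x,y ∈ A; the map b(x,y) = c(x,y) + c(y,x) is additive in each variable; and q(0) = 0, q(−x) = q(x), and q(n·x) = n²·q(x) for every integer n. In particular the trace q of a braided 3-cocycle is a quadratic function on A. -/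
/-!
Specialising the cocycle identities (ii) and (iii) at suitable arguments shows that
`b(x, y) = c(x, y) + c(y, x)` is additive in each variable, and a combination of (i), (ii), (iii)
shows that `b` is the polarization of the trace `q(x) = c(x, x)`. Since moreover `b(x, x) = 2 q(x)`,
the usual induction gives `q(n • x) = n² q(x)`: `q((n+1) • x) = q(n • x) + q(x) + n • b(x, x)`.
-/

section QuadraticOfPolar

variable {A M : Type*} [AddCommGroup A] [AddCommGroup M] {q : A → M} {B : A →+ A →+ M}

theorem map_zero_of_polar (hpol : ∀ x y, q (x + y) - q x - q y = B x y) : q 0 = 0 := by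
  simpa using hpol 0 0

theorem map_neg_of_polar (hpol : ∀ x y, q (x + y) - q x - q y = B x y)
    (hdiag : ∀ x, B x x = 2 • q x) (x : A) : q (-x) = q x := by
  have key := hpol x (-x)
  rw [add_neg_cancel, map_zero_of_polar hpol, map_neg, hdiag] at key
  linear_combination (norm := module) -key

theorem map_nsmul_of_polar (hpol : ∀ x y, q (x + y) - q x - q y = B x y)
    (hdiag : ∀ x, B x x = 2 • q x) (n : ℕ) (x : A) : q (n • x) = (n ^ 2) • q x := by
  induction n with
  | zero => simpa using map_zero_of_polar hpol
  | succ n ih =>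
    have step := hpol (n • x) x
    rw [← succ_nsmul, map_nsmul, AddMonoidHom.nsmul_apply, hdiag, ih] at step
    linear_combination (norm := module) step

theorem map_zsmul_of_polar (hpol : ∀ x y, q (x + y) - q x - q y = B x y)
    (hdiag : ∀ x, B x x = 2 • q x) (n : ℤ) (x : A) : q (n • x) = (n ^ 2) • q x := by
  obtain ⟨n, rfl | rfl⟩ := Int.eq_nat_or_neg n
  · rw [natCast_zsmul, map_nsmul_of_polar hpol hdiag, ← natCast_zsmul, Nat.cast_pow]
  · rw [neg_smul, map_neg_of_polar hpol hdiag, natCast_zsmul, map_nsmul_of_polar hpol hdiag,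
      ← natCast_zsmul, Nat.cast_pow, neg_sq]

end QuadraticOfPolar

structure IsBraidedCocycle {A M : Type*} [AddCommGroup A] [AddCommGroup M]
    (h : A → A → A → M) (c : A → A → M) : Prop where
  cocycle : ∀ x y z w : A,
    h y z w - h (x + y) z w + h x (y + z) w - h x y (z + w) + h x y z = 0
  hexagon_left : ∀ x y z : A,
    c y z - c (x + y) z + c x z + h x y z - h x z y + h z x y = 0
  hexagon_right : ∀ x y z : A,
    c x y - c x (y + z) + c x z - h x y z + h y x z - h y z x = 0

namespace IsBraidedCocycle

variable {A M : Type*} [AddCommGroup A] [AddCommGroup M]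
  {h : A → A → A → M} {c : A → A → M} (hc : IsBraidedCocycle h c)
include hc

theorem polar_add_left (x y z : A) :
    c (x + y) z + c z (x + y) = (c x z + c z x) + (c y z + c z y) := by
  linear_combination (norm := abel) -hc.hexagon_left x y z - hc.hexagon_right z x y

theorem polar_add_right (x y z : A) :
    c x (y + z) + c (y + z) x = (c x y + c y x) + (c x z + c z x) := by
  linear_combination (norm := abel) -hc.hexagon_right x y z - hc.hexagon_left y z x

def polar : A →+ A →+ M :=
  AddMonoidHom.mk' (fun x => AddMonoidHom.mk' (fun y => c x y + c y x) (hc.polar_add_right x))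
    fun x y => by ext z; exact hc.polar_add_left x y z

theorem polar_apply (x y : A) : hc.polar x y = c x y + c y x :=
  rfl

theorem polarization (x y : A) :
    c (x + y) (x + y) - c x x - c y y = hc.polar x y := by
  have assoc := hc.cocycle x y x y
  rw [add_comm y x] at assoc
  rw [polar_apply]
  linear_combination (norm := abel) -hc.hexagon_left x y (x + y) - hc.hexagon_right x x y
    - hc.hexagon_right y x y - assoc

theorem polar_self (x : A) : hc.polar x x = 2 • c x x := by
  rw [polar_apply, two_nsmul]

end IsBraidedCocycle

/-- The trace `q(x) = c(x,x)` of a braided (abelian) 3-cocycle `(h,c)` is a quadratic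
function: its polarization is `q(x+y) − q(x) − q(y) = c(x,y) + c(y,x)`, the latter is
biadditive, and `q(0) = 0`, `q(−x) = q(x)`, `q(n·x) = n²·q(x)`. -/
theorem stmt_14 {A M : Type*} [AddCommGroup A] [AddCommGroup M]
    (h : A → A → A → M) (c : A → A → M)
    (h1 : ∀ x y z w : A,
      h y z w - h (x + y) z w + h x (y + z) w - h x y (z + w) + h x y z = 0)
    (h2 : ∀ x y z : A,
      c y z - c (x + y) z + c x z + h x y z - h x z y + h z x y = 0)
    (h3 : ∀ x y z : A,
      c x y - c x (y + z) + c x z - h x y z + h y x z - h y z x = 0) :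
    (∀ x y : A, c (x + y) (x + y) - c x x - c y y = c x y + c y x) ∧
    (∀ x y z : A, c (x + y) z + c z (x + y) = (c x z + c z x) + (c y z + c z y)) ∧
    (∀ x y z : A, c x (y + z) + c (y + z) x = (c x y + c y x) + (c x z + c z x)) ∧
    c 0 0 = 0 ∧
    (∀ x : A, c (-x) (-x) = c x x) ∧
    (∀ (n : ℤ) (x : A), c (n • x) (n • x) = n ^ 2 • c x x) := by
  have hc : IsBraidedCocycle h c := ⟨h1, h2, h3⟩
  exact ⟨hc.polarization, hc.polar_add_left, hc.polar_add_right,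
    map_zero_of_polar (q := fun x => c x x) hc.polarization,
    map_neg_of_polar (q := fun x => c x x) hc.polarization hc.polar_self,
    map_zsmul_of_polar (q := fun x => c x x) hc.polarization hc.polar_self⟩
end

section
/- Let M be an abelian group. Then the map sending l ∈ M with 4l = 0 to the pair (−2l, l) is a group isomorphism from the subgroup M₄ = {m ∈ M : 4m = 0} onto the subgroup {(m,l) ∈ M × M : 2m = 0, 2l + m = 0, 2l − m = 0} of M × M. -/
/-- The 4-torsion subgroup `M₄ = {m ∈ M : 4m = 0}`. -/
def torsion4 (M : Type*) [AddCommGroup M] : AddSubgroup M where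
  carrier := {m : M | (4 : ℤ) • m = 0}
  zero_mem' := by simp
  add_mem' := by
    intro a b ha hb
    simp only [Set.mem_setOf_eq] at ha hb ⊢
    rw [smul_add, ha, hb, add_zero]
  neg_mem' := by
    intro a ha
    simp only [Set.mem_setOf_eq] at ha ⊢
    rw [smul_neg, ha, neg_zero]

/-- The subgroup `{(m,l) ∈ M × M : 2m = 0, 2l + m = 0, 2l − m = 0}`. -/
def cocycle3Subgroup (M : Type*) [AddCommGroup M] : AddSubgroup (M × M) where
  carrier := {p : M × M |
    (2 : ℤ) • p.1 = 0 ∧ (2 : ℤ) • p.2 + p.1 = 0 ∧ (2 : ℤ) • p.2 - p.1 = 0}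
  zero_mem' := by simp
  add_mem' := by
    rintro ⟨a, b⟩ ⟨a', b'⟩ ⟨h1, h2, h3⟩ ⟨h1', h2', h3'⟩
    refine ⟨?_, ?_, ?_⟩
    · show (2 : ℤ) • (a + a') = 0
      rw [smul_add, h1, h1', add_zero]
    · show (2 : ℤ) • (b + b') + (a + a') = 0
      rw [smul_add, show (2 : ℤ) • b + (2 : ℤ) • b' + (a + a')
          = ((2 : ℤ) • b + a) + ((2 : ℤ) • b' + a') by abel, h2, h2', add_zero]
    · show (2 : ℤ) • (b + b') - (a + a') = 0
      rw [smul_add, show (2 : ℤ) • b + (2 : ℤ) • b' - (a + a')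
          = ((2 : ℤ) • b - a) + ((2 : ℤ) • b' - a') by abel, h3, h3', add_zero]
  neg_mem' := by
    rintro ⟨a, b⟩ ⟨h1, h2, h3⟩
    refine ⟨?_, ?_, ?_⟩
    · show (2 : ℤ) • (-a) = 0
      rw [smul_neg, h1, neg_zero]
    · show (2 : ℤ) • (-b) + (-a) = 0
      rw [show (2 : ℤ) • (-b) + (-a) = -((2 : ℤ) • b + a) by abel, h2, neg_zero]
    · show (2 : ℤ) • (-b) - (-a) = 0
      rw [show (2 : ℤ) • (-b) - (-a) = -((2 : ℤ) • b - a) by abel, h3, neg_zero]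

/-- The map `l ↦ (−2l, l)` is a group isomorphism from `M₄` onto the subgroup
`{(m,l) : 2m = 0, 2l + m = 0, 2l − m = 0}` of `M × M`.  This computes
`H³_br(ℤ/2ℤ, M) ≅ M₄`. -/
theorem stmt_16 (M : Type*) [AddCommGroup M] :
    ∃ e : torsion4 M ≃+ cocycle3Subgroup M,
      ∀ l : torsion4 M, (e l : M × M) = (-((2 : ℤ) • (l : M)), (l : M)) := by
  refine ⟨{
    toFun := fun l => ⟨(-((2 : ℤ) • (l : M)), (l : M)), ?_, ?_, ?_⟩
    invFun := fun p => ⟨(p : M × M).2, ?_⟩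
    left_inv := ?_
    right_inv := ?_
    map_add' := ?_ }, fun l => rfl⟩
  · show (2 : ℤ) • (-((2 : ℤ) • (l : M))) = 0
    have h4 : (4 : ℤ) • (l : M) = 0 := l.2
    rw [smul_neg, smul_smul]
    norm_num [h4]
  · show (2 : ℤ) • (l : M) + (-((2 : ℤ) • (l : M))) = 0
    abel
  · show (2 : ℤ) • (l : M) - (-((2 : ℤ) • (l : M))) = 0
    have h4 : (4 : ℤ) • (l : M) = 0 := l.2
    rw [sub_neg_eq_add, ← two_smul ℤ, smul_smul]
    norm_num [h4]
  · obtain ⟨h1, h2, h3⟩ := p.2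
    show (4 : ℤ) • (p : M × M).2 = 0
    have := congrArg₂ (· + ·) h2 h3
    simp only [add_zero] at this
    calc (4 : ℤ) • (p : M × M).2 = ((2 : ℤ) • (p : M × M).2 + (p : M × M).1)
        + ((2 : ℤ) • (p : M × M).2 - (p : M × M).1) := by
          rw [show (4:ℤ) = 2 + 2 by norm_num, add_smul]; abel
      _ = 0 := by rw [h2, h3, add_zero]
  · intro l; rfl
  · rintro ⟨⟨a, b⟩, h1, h2, h3⟩
    ext
    · show -((2 : ℤ) • b) = a
      have h2' : (2 : ℤ) • b + a = 0 := h2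
      rw [neg_eq_iff_add_eq_zero]
      exact h2'
    · rfl
  · intro a b
    ext
    · show -((2 : ℤ) • ((a : M) + (b : M))) = -((2 : ℤ) • (a : M)) + -((2 : ℤ) • (b : M))
      rw [smul_add]; abel
    · rfl
end

section
/- Let M be an abelian group. Set K = {(m,l,k) ∈ M³ : 2(m − l + k) = 0} and I = {(2m, 2l+m, 2l−m) : m,l ∈ M}. Then I is a subgroup of K, and the quotient group K/I is isomorphic to M₂ × (M/4M), where M₂ = {m ∈ M : 2m = 0} and M/4M is the quotient of M by the subgroup {4m : m ∈ M}. -/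
/-- The differential `d₃ : M² → M³`, `d₃(m,l) = (2m, 2l+m, 2l−m)`, of the braided
Eilenberg–Mac Lane cochain complex of `ℤ/2ℤ`. -/
def d3 (M : Type*) [AddCommGroup M] : (M × M) →+ (M × M × M) where
  toFun p := ((2 : ℤ) • p.1, (2 : ℤ) • p.2 + p.1, (2 : ℤ) • p.2 - p.1)
  map_zero' := by simp
  map_add' p q := by
    simp only [Prod.fst_add, Prod.snd_add, smul_add, Prod.mk_add_mk, Prod.mk.injEq]
    refine ⟨trivial, by abel, by abel⟩

/-- The subgroup `K = {(m,l,k) ∈ M³ : 2(m − l + k) = 0}` (the kernel of the differential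
`d₄` out of degree 3). -/
def kerD4 (M : Type*) [AddCommGroup M] : AddSubgroup (M × M × M) where
  carrier := {p : M × M × M | (2 : ℤ) • (p.1 - p.2.1 + p.2.2) = 0}
  zero_mem' := by simp
  add_mem' := by
    intro p q hp hq
    simp only [Set.mem_setOf_eq, Prod.fst_add, Prod.snd_add] at hp hq ⊢
    rw [show p.1 + q.1 - (p.2.1 + q.2.1) + (p.2.2 + q.2.2)
        = (p.1 - p.2.1 + p.2.2) + (q.1 - q.2.1 + q.2.2) by abel, smul_add, hp, hq, add_zero]
  neg_mem' := by
    intro p hp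
    simp only [Set.mem_setOf_eq, Prod.fst_neg, Prod.snd_neg] at hp ⊢
    rw [show -p.1 - -p.2.1 + -p.2.2 = -(p.1 - p.2.1 + p.2.2) by abel, smul_neg, hp, neg_zero]

/-- The 2-torsion subgroup `M₂ = {m ∈ M : 2m = 0}`. -/
def torsion2 (M : Type*) [AddCommGroup M] : AddSubgroup M where
  carrier := {m : M | (2 : ℤ) • m = 0}
  zero_mem' := by simp
  add_mem' := by
    intro a b ha hb
    simp only [Set.mem_setOf_eq] at ha hb ⊢
    rw [smul_add, ha, hb, add_zero]
  neg_mem' := by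
    intro a ha
    simp only [Set.mem_setOf_eq] at ha ⊢
    rw [smul_neg, ha, neg_zero]

/-- The invariant map `K → M₂ × M/4M`, `(m,l,k) ↦ (m−l+k, [l+k])`. -/
def phi17 (M : Type*) [AddCommGroup M] :
    (kerD4 M) →+ (torsion2 M × (M ⧸ (smulAddHom ℤ M 4).range)) where
  toFun p := (⟨p.1.1 - p.1.2.1 + p.1.2.2, p.2⟩,
    QuotientAddGroup.mk (p.1.2.1 + p.1.2.2))
  map_zero' := by
    refine Prod.ext (Subtype.ext ?_) ?_ <;> simp
  map_add' p q := by
    refine Prod.ext (Subtype.ext ?_) ?_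
    · show (p.1.1 + q.1.1) - (p.1.2.1 + q.1.2.1) + (p.1.2.2 + q.1.2.2) = _
      show _ = (p.1.1 - p.1.2.1 + p.1.2.2) + (q.1.1 - q.1.2.1 + q.1.2.2)
      abel
    · show QuotientAddGroup.mk ((p.1.2.1 + q.1.2.1) + (p.1.2.2 + q.1.2.2)) = _
      rw [show (p.1.2.1 + q.1.2.1) + (p.1.2.2 + q.1.2.2)
          = (p.1.2.1 + p.1.2.2) + (q.1.2.1 + q.1.2.2) by abel]
      rfl

/-- `I = {(2m, 2l+m, 2l−m) : m,l ∈ M}` is contained in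
`K = {(m,l,k) : 2(m−l+k) = 0}`, and the quotient `K/I` is isomorphic to `M₂ × M/4M`.
This computes `H⁴_br(ℤ/2ℤ, M) ≅ M₂ ⊕ M/4M`. -/
theorem stmt_17 (M : Type*) [AddCommGroup M] :
    (d3 M).range ≤ kerD4 M ∧
    Nonempty (((kerD4 M) ⧸ ((d3 M).range.addSubgroupOf (kerD4 M))) ≃+
      (torsion2 M × (M ⧸ (smulAddHom ℤ M 4).range))) := by
  have hle : (d3 M).range ≤ kerD4 M := by
    rintro _ ⟨⟨a, b⟩, rfl⟩
    show (2 : ℤ) • ((2:ℤ) • a - ((2:ℤ) • b + a) + ((2:ℤ) • b - a)) = 0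
    rw [show (2:ℤ) • a - ((2:ℤ) • b + a) + ((2:ℤ) • b - a) = 0 by abel, smul_zero]
  refine ⟨hle, ?_⟩
  have hsurj : Function.Surjective (phi17 M) := by
    rintro ⟨⟨t, ht⟩, x⟩
    induction x using QuotientAddGroup.induction_on with
    | H x =>
      have hmem : (t - x, 0, x) ∈ kerD4 M := by
        show (2 : ℤ) • (t - x - 0 + x) = 0
        rw [show t - x - 0 + x = t by abel]; exact ht
      refine ⟨⟨(t - x, 0, x), hmem⟩, ?_⟩
      refine Prod.ext (Subtype.ext ?_) ?_
      · show t - x - 0 + x = t; abel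
      · show QuotientAddGroup.mk ((0:M) + x) = _
        rw [zero_add]
  have hker : (phi17 M).ker = (d3 M).range.addSubgroupOf (kerD4 M) := by
    ext ⟨⟨m, l, k⟩, hp⟩
    constructor
    · intro h
      have h1 : m - l + k = 0 := congrArg (Subtype.val ∘ Prod.fst) h
      have h2 : QuotientAddGroup.mk (l + k) =
          (0 : M ⧸ (smulAddHom ℤ M 4).range) := congrArg Prod.snd h
      rw [QuotientAddGroup.eq_zero_iff] at h2
      obtain ⟨b, hb⟩ := h2
      simp only [smulAddHom_apply] at hb
      refine ⟨(l - (2:ℤ) • b, b), ?_⟩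
      have hm : m = l - k := by
        have : m - (l - k) = 0 := by rw [← h1]; abel
        exact sub_eq_zero.mp this
      show ((2:ℤ) • (l - (2:ℤ) • b), (2:ℤ) • b + (l - (2:ℤ) • b),
          (2:ℤ) • b - (l - (2:ℤ) • b)) = (m, l, k)
      refine Prod.ext ?_ (Prod.ext ?_ ?_)
      · show (2:ℤ) • (l - (2:ℤ) • b) = m
        rw [hm, show (2:ℤ) • (l - (2:ℤ) • b) = (2:ℤ) • l - (4:ℤ) • b by
          rw [smul_sub, smul_smul]; norm_num, hb]
        abel
      · show (2:ℤ) • b + (l - (2:ℤ) • b) = l; abel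
      · show (2:ℤ) • b - (l - (2:ℤ) • b) = k
        rw [show (2:ℤ) • b - (l - (2:ℤ) • b) = (4:ℤ) • b - l by
          rw [show ((4:ℤ)•b : M) = (2:ℤ)•b + (2:ℤ)•b by rw [← add_smul]; norm_num]; abel, hb]
        abel
    · rintro ⟨⟨a, b⟩, hab⟩
      have hab' : ((2:ℤ) • a, (2:ℤ) • b + a, (2:ℤ) • b - a) = (m, l, k) := hab
      simp only [Prod.mk.injEq] at hab'
      obtain ⟨h1, h2, h3⟩ := hab'
      show phi17 M _ = 0
      refine Prod.ext (Subtype.ext ?_) ?_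
      · show m - l + k = 0
        rw [← h1, ← h2, ← h3]; abel
      · show QuotientAddGroup.mk (l + k) = 0
        rw [QuotientAddGroup.eq_zero_iff]
        refine ⟨b, ?_⟩
        simp only [smulAddHom_apply]
        rw [← h2, ← h3, show ((2:ℤ) • b + a) + ((2:ℤ) • b - a) = (2:ℤ)•b + (2:ℤ)•b by abel,
          ← add_smul]
        norm_num
  exact ⟨(QuotientAddGroup.quotientAddEquivOfEq hker.symm).trans
    (QuotientAddGroup.quotientKerEquivOfSurjective _ hsurj)⟩
end
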